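/- Let G be a simple connected graph and v_i a vertex. Then 𝓛E_G(v_i) ≤ √( (1/d_i) · Σ_{w ∼ v_i} 1/d_w ), where the sum runs over the neighbors w of v_i. Equality holds if and only if G is a star and v_i is its center (i.e., d_i = m). -/

import Mathlib

open Matrix BigOperators Finset

open scoped ComplexOrder in
/-- The positive semidefinite square root of a positive semidefinite matrix
(the definition `Matrix.PosSemidef.sqrt` of the older Mathlib, no longer present). -/
noncomputable def Matrix.PosSemidef.sqrt {n : Type*} [Fintype n] [DecidableEq n] {𝕜 : Type*}
    [RCLike 𝕜] {A : Matrix n n 𝕜} (hA : A.PosSemidef) : Matrix n n 𝕜 :=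
  hA.1.eigenvectorUnitary.1 * diagonal ((↑) ∘ (√·) ∘ hA.1.eigenvalues) *
  (star hA.1.eigenvectorUnitary : Matrix n n 𝕜)

/-- The absolute value of a real matrix `B`, defined as `(B * Bᵀ)^(1/2)`. -/
noncomputable def matAbs {n : ℕ} (B : Matrix (Fin n) (Fin n) ℝ) : Matrix (Fin n) (Fin n) ℝ :=
  (Matrix.conjTranspose_eq_transpose_of_trivial B ▸
    Matrix.posSemidef_self_mul_conjTranspose B : (B * Bᵀ).PosSemidef).sqrt

/-- The (adjacency) energy of the vertex `i` of the graph `G`: `|A|_{ii}`. -/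
noncomputable def vertexEnergy {n : ℕ} (G : SimpleGraph (Fin n)) [DecidableRel G.Adj]
    (i : Fin n) : ℝ :=
  matAbs (G.adjMatrix ℝ) i i

/-- The Laplacian energy of the vertex `i` of the graph `G`: `(|L - (2m/n) I|)_{ii}`. -/
noncomputable def vertexLapEnergy {n : ℕ} (G : SimpleGraph (Fin n)) [DecidableRel G.Adj]
    (i : Fin n) : ℝ :=
  matAbs (G.lapMatrix ℝ - ((2 * (G.edgeFinset.card : ℝ)) / n) • 1) i i

/-- The normalized Laplacian `𝓛 = I - D^{-1/2} A D^{-1/2}` of the graph `G`. -/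
noncomputable def normLap {n : ℕ} (G : SimpleGraph (Fin n)) [DecidableRel G.Adj] :
    Matrix (Fin n) (Fin n) ℝ :=
  1 - Matrix.diagonal (fun i => (Real.sqrt (G.degree i))⁻¹) * G.adjMatrix ℝ *
      Matrix.diagonal (fun i => (Real.sqrt (G.degree i))⁻¹)

/-- The normalized Laplacian energy of the vertex `i` of the graph `G`: `(|𝓛 - I|)_{ii}`. -/
noncomputable def vertexNormLapEnergy {n : ℕ} (G : SimpleGraph (Fin n)) [DecidableRel G.Adj]
    (i : Fin n) : ℝ :=
  matAbs (normLap G - 1) i i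

/-! With `M = (𝓛 - I)(𝓛 - I)ᵀ` and `S = √M`, the energy of `vᵢ` is `S i i`, while
`M i i = (S * S) i i = ∑ₖ (S i k)²`; this gives the bound, with equality iff row `i` of `S`
vanishes off the diagonal, i.e. iff `S` commutes with the matrix unit `E i i`. Since `S` is a
continuous function of `M` and `M = S²`, this is equivalent to `M` commuting with `E i i`, i.e. to
`M i k = 0` for `k ≠ i`. Now `M i k` is a positive multiple of `∑ 1 / d_w` over the common
neighbours `w` of `vᵢ` and `v_k`, so equality means that no other vertex shares a neighbour with
`vᵢ`; in a connected graph this says that every edge contains `vᵢ`, i.e. `d_i = m`. -/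

lemma le_sqrt_sum_sq {ι : Type*} [Fintype ι] (v : ι → ℝ) (i : ι) : v i ≤ √(∑ k, v k ^ 2) :=
  (le_abs_self _).trans <| Real.abs_le_sqrt <|
    Finset.single_le_sum (fun k _ => sq_nonneg (v k)) (Finset.mem_univ i)

lemma eq_sqrt_sum_sq_iff {ι : Type*} [Fintype ι] [DecidableEq ι] {v : ι → ℝ} {i : ι}
    (hv : 0 ≤ v i) : v i = √(∑ k, v k ^ 2) ↔ ∀ k ≠ i, v k = 0 := by
  rw [eq_comm, Real.sqrt_eq_iff_eq_sq (Finset.sum_nonneg fun k _ => sq_nonneg _) hv,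
    ← Finset.add_sum_erase _ _ (Finset.mem_univ i), add_eq_left,
    Finset.sum_eq_zero_iff_of_nonneg fun k _ => sq_nonneg _]
  simp

lemma Matrix.IsSymm.mul_self_apply_self {m R : Type*} [Fintype m] [CommSemiring R]
    {S : Matrix m m R} (hS : S.IsSymm) (i : m) : (S * S) i i = ∑ k, S i k ^ 2 := by
  simp only [mul_apply, hS.apply i, sq]

lemma Matrix.IsSymm.commute_single_iff {m R : Type*} [DecidableEq m] [Fintype m] [Semiring R]
    {X : Matrix m m R} (hX : X.IsSymm) (i : m) :
    Commute X (single i i 1) ↔ ∀ k ≠ i, X i k = 0 := by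
  rw [commute_iff_eq, ← Matrix.ext_iff]
  constructor
  · intro h k hk
    simpa [hk] using (h i k).symm
  · intro h a b
    by_cases ha : a = i <;> by_cases hb : b = i
    · simp [ha, hb]
    · simp [ha, hb, h b hb]
    · simp [ha, hb, hX.apply i a, h a ha]
    · simp [ha, hb]

lemma Matrix.PosSemidef.isSymm {m : Type*} [Fintype m] {A : Matrix m m ℝ} (hA : A.PosSemidef) :
    A.IsSymm :=
  isHermitian_iff_isSymm.mp hA.1

lemma Matrix.posSemidef_self_mul_transpose {m : Type*} [Fintype m] (B : Matrix m m ℝ) :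
    (B * Bᵀ).PosSemidef :=
  conjTranspose_eq_transpose_of_trivial B ▸ posSemidef_self_mul_conjTranspose B

section
open scoped MatrixOrder
variable {m : Type*} [Fintype m] [DecidableEq m] {A : Matrix m m ℝ}

lemma Matrix.PosSemidef.sqrt_eq_cfc (hA : A.PosSemidef) : hA.sqrt = cfc Real.sqrt A := by
  rw [hA.1.cfc_eq]
  simp [Matrix.PosSemidef.sqrt, Matrix.IsHermitian.cfc, Unitary.conjStarAlgAut_apply]

lemma Matrix.PosSemidef.sqrt_mul_self (hA : A.PosSemidef) : hA.sqrt * hA.sqrt = A := by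
  have : IsSelfAdjoint A := hA.1.isSelfAdjoint
  rw [hA.sqrt_eq_cfc, ← cfc_mul Real.sqrt Real.sqrt A]
  conv_rhs => rw [← cfc_id' ℝ A]
  refine cfc_congr fun x hx => Real.mul_self_sqrt ?_
  exact (Matrix.posSemidef_iff_isHermitian_and_spectrum_nonneg.mp hA).2 hx

lemma Matrix.PosSemidef.posSemidef_sqrt (hA : A.PosSemidef) : hA.sqrt.PosSemidef := by
  rw [hA.sqrt_eq_cfc, ← Matrix.nonneg_iff_posSemidef]
  exact cfc_nonneg fun x _ => Real.sqrt_nonneg x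

lemma Matrix.PosSemidef.commute_sqrt {B : Matrix m m ℝ} (hA : A.PosSemidef) (h : Commute A B) :
    Commute hA.sqrt B := by
  rw [hA.sqrt_eq_cfc]
  exact h.cfc_real _

lemma Matrix.PosSemidef.apply_self_eq_sum_sqrt_sq (hA : A.PosSemidef) (i : m) :
    A i i = ∑ k, hA.sqrt i k ^ 2 := by
  conv_lhs => rw [← hA.sqrt_mul_self]
  exact hA.posSemidef_sqrt.isSymm.mul_self_apply_self i

theorem Matrix.PosSemidef.sqrt_apply_self_le (hA : A.PosSemidef) (i : m) :
    hA.sqrt i i ≤ √(A i i) := by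
  rw [hA.apply_self_eq_sum_sqrt_sq]
  exact le_sqrt_sum_sq _ i

theorem Matrix.PosSemidef.sqrt_apply_self_eq_iff (hA : A.PosSemidef) (i : m) :
    hA.sqrt i i = √(A i i) ↔ ∀ k ≠ i, A i k = 0 := by
  have hS := hA.posSemidef_sqrt
  rw [hA.apply_self_eq_sum_sqrt_sq, eq_sqrt_sum_sq_iff hS.diag_nonneg,
    ← hS.isSymm.commute_single_iff, ← hA.isSymm.commute_single_iff]
  constructor
  · intro h
    simpa only [hA.sqrt_mul_self] using h.mul_left h
  · exact hA.commute_sqrt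

end

lemma matAbs_eq_sqrt {n : ℕ} (B : Matrix (Fin n) (Fin n) ℝ) :
    matAbs B = (posSemidef_self_mul_transpose B).sqrt :=
  rfl

theorem SimpleGraph.degree_eq_card_edgeFinset_iff {V : Type*} [Fintype V] [DecidableEq V]
    (G : SimpleGraph V) [DecidableRel G.Adj] (v : V) :
    G.degree v = #G.edgeFinset ↔ ∀ e ∈ G.edgeSet, v ∈ e := by
  rw [← card_incidenceFinset_eq_degree, incidenceFinset_eq_filter, card_filter_eq_iff]
  simp

theorem SimpleGraph.Connected.forall_mem_edgeSet_iff {V : Type*} [Fintype V]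
    {G : SimpleGraph V} [DecidableRel G.Adj] (hG : G.Connected) (i : V) :
    (∀ e ∈ G.edgeSet, i ∈ e) ↔
      ∀ k ≠ i, Disjoint (G.neighborFinset i) (G.neighborFinset k) := by
  simp only [Finset.disjoint_left, mem_neighborFinset]
  constructor
  · intro h k hk w hiw hkw
    rcases Sym2.mem_iff.mp (h s(k, w) hkw) with rfl | rfl
    exacts [hk rfl, G.irrefl hiw]
  · intro h
    have hstar : ∀ v, v = i ∨ G.Adj i v := by
      intro v
      induction (reachable_iff_reflTransGen i v).mp (hG i v) with
      | refl => exact Or.inl rfl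
      | tail _ hbc ih =>
        rcases ih with rfl | hib
        · exact Or.inr hbc
        · by_contra! hc
          exact h _ hc.1 hib hbc.symm
    rintro ⟨u, w⟩ huw
    rcases hstar u with rfl | hiu
    · exact Sym2.mem_mk_left _ _
    · by_contra hw
      exact h w (fun hwi => hw (hwi ▸ Sym2.mem_mk_right _ _)) hiu huw.symm

section
open SimpleGraph
variable {n : ℕ} (G : SimpleGraph (Fin n)) [DecidableRel G.Adj]

lemma normLap_sub_one_apply (x y : Fin n) :
    (normLap G - 1) x y = -((√(G.degree x))⁻¹ * G.adjMatrix ℝ x y * (√(G.degree y))⁻¹) := by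
  rw [normLap, sub_sub_cancel_left, neg_apply, mul_diagonal, diagonal_mul]

lemma normLap_sub_one_mul_transpose_apply (x y : Fin n) :
    ((normLap G - 1) * (normLap G - 1)ᵀ : Matrix (Fin n) (Fin n) ℝ) x y =
      (√(G.degree x) * √(G.degree y))⁻¹ *
        ∑ w ∈ G.neighborFinset x ∩ G.neighborFinset y, (G.degree w : ℝ)⁻¹ := by
  have hterm : ∀ w, (normLap G - 1) x w * (normLap G - 1) y w =
      if w ∈ G.neighborFinset x ∩ G.neighborFinset y then
        (√(G.degree x) * √(G.degree y))⁻¹ * (G.degree w : ℝ)⁻¹ else 0 := by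
    intro w
    have hw : (√(G.degree w : ℝ))⁻¹ * (√(G.degree w))⁻¹ = (G.degree w : ℝ)⁻¹ := by
      rw [← mul_inv, Real.mul_self_sqrt (Nat.cast_nonneg _)]
    rw [normLap_sub_one_apply, normLap_sub_one_apply, neg_mul_neg]
    by_cases h : G.Adj x w ∧ G.Adj y w
    · rw [if_pos (by simpa using h), adjMatrix_apply, adjMatrix_apply, if_pos h.1, if_pos h.2,
        mul_inv]
      linear_combination (√(G.degree x : ℝ))⁻¹ * (√(G.degree y : ℝ))⁻¹ * hw
    · rw [if_neg (by simpa using h)]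
      rcases not_and_or.mp h with h | h <;> simp [h]
  simp only [mul_apply, transpose_apply, hterm, Finset.sum_ite_mem, Finset.univ_inter,
    Finset.mul_sum]

lemma normLap_sub_one_mul_transpose_apply_self (i : Fin n) :
    ((normLap G - 1) * (normLap G - 1)ᵀ : Matrix (Fin n) (Fin n) ℝ) i i =
      1 / (G.degree i : ℝ) * ∑ w ∈ G.neighborFinset i, 1 / (G.degree w : ℝ) := by
  rw [normLap_sub_one_mul_transpose_apply, inter_self,
    Real.mul_self_sqrt (Nat.cast_nonneg _)]
  simp only [one_div]

lemma normLap_sub_one_mul_transpose_apply_eq_zero_iff (x y : Fin n) :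
    ((normLap G - 1) * (normLap G - 1)ᵀ : Matrix (Fin n) (Fin n) ℝ) x y = 0 ↔
      Disjoint (G.neighborFinset x) (G.neighborFinset y) := by
  have hdeg : ∀ {u v}, G.Adj u v → (0 : ℝ) < G.degree u := fun h =>
    Nat.cast_pos.mpr ((G.degree_pos_iff_exists_adj _).mpr ⟨_, h⟩)
  rw [normLap_sub_one_mul_transpose_apply, Finset.disjoint_iff_inter_eq_empty]
  refine ⟨fun h => ?_, fun h => by rw [h, sum_empty, mul_zero]⟩
  by_contra hne
  obtain ⟨w, hw⟩ := Finset.nonempty_iff_ne_empty.mpr hne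
  have hxw : G.Adj x w := (mem_neighborFinset _ _ _).mp (mem_inter.mp hw).1
  have hyw : G.Adj y w := (mem_neighborFinset _ _ _).mp (mem_inter.mp hw).2
  refine h.not_gt (mul_pos ?_ (Finset.sum_pos (fun u hu => inv_pos.mpr ?_) ⟨w, hw⟩))
  · exact inv_pos.mpr (mul_pos (Real.sqrt_pos.mpr (hdeg hxw)) (Real.sqrt_pos.mpr (hdeg hyw)))
  · exact hdeg ((mem_neighborFinset _ _ _).mp (mem_inter.mp hu).1).symm

end

theorem stmt12 {n : ℕ} (G : SimpleGraph (Fin n)) [DecidableRel G.Adj]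
    (hconn : G.Connected) (i : Fin n) :
    vertexNormLapEnergy G i ≤
        Real.sqrt ((1 / (G.degree i : ℝ)) *
          ∑ w ∈ G.neighborFinset i, 1 / (G.degree w : ℝ)) ∧
      (vertexNormLapEnergy G i =
          Real.sqrt ((1 / (G.degree i : ℝ)) *
            ∑ w ∈ G.neighborFinset i, 1 / (G.degree w : ℝ)) ↔
        G.degree i = G.edgeFinset.card) := by
  have hM := posSemidef_self_mul_transpose (normLap G - 1)
  rw [vertexNormLapEnergy, matAbs_eq_sqrt, ← normLap_sub_one_mul_transpose_apply_self]
  refine ⟨hM.sqrt_apply_self_le i, ?_⟩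
  rw [hM.sqrt_apply_self_eq_iff, G.degree_eq_card_edgeFinset_iff, hconn.forall_mem_edgeSet_iff]
  simp only [normLap_sub_one_mul_transpose_apply_eq_zero_iff]
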